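/- arXiv:2109.12867 — 2 statements merged into one kernel-verified Lean document; each statement's English description precedes it below -/
import Mathlib

section
/- Let S ⊆ ℤ, p a prime, (b_i)_{i≥0} a p-ordering of S, and f ∈ ℤ[x] of degree k. Write f = Σ_{i=0}^k c_i (x - b_0)(x - b_1)···(x - b_{i-1}) in the generalized falling factorial basis determined by the p-ordering. If p^e divides f(b_i) for all 0 ≤ i ≤ k, then p^e divides c_i · (b_i - b_0)(b_i - b_1)···(b_i - b_{i-1}) for all 0 ≤ i ≤ k. -/
open Polynomial Finset

/-- `p`-adic valuation on ℤ, valued in `ℕ∞` with `vp p 0 = ⊤`. -/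
noncomputable def vp (p : ℕ) (x : ℤ) : ℕ∞ :=
  if x = 0 then ⊤ else (padicValInt p x : ℕ∞)

/-- `u` is a `p`-ordering of `S ⊆ ℤ`. -/
def IsPOrdering (p : ℕ) (S : Set ℤ) (u : ℕ → ℤ) : Prop :=
  (∀ i, u i ∈ S) ∧
  ∀ m, 0 < m → ∀ a ∈ S,
    vp p (∏ i ∈ Finset.range m, (u m - u i)) ≤ vp p (∏ i ∈ Finset.range m, (a - u i))

/-- `e p m` is the exponent of `p` in the Bhargava factorial `m!_S`. -/
def IsFactExp (S : Set ℤ) (e : ℕ → ℕ → ℕ) : Prop :=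
  ∀ p : ℕ, p.Prime → ∀ u : ℕ → ℤ, IsPOrdering p S u →
    ∀ m, (e p m : ℕ∞) = vp p (∏ i ∈ Finset.range m, (u m - u i))

/-- `x 0, …, x k` is a `d_k`-ordering of `S`, where `e` records the exponents of the
Bhargava factorials of `S`. -/
def IsDkOrdering (S : Set ℤ) (d : ℤ) (k : ℕ) (e : ℕ → ℕ → ℕ) (x : ℕ → ℤ) : Prop :=
  ∀ p : ℕ, p.Prime → (p : ℤ) ∣ d →
    ∃ u : ℕ → ℤ, IsPOrdering p S u ∧ ∀ i ≤ k, (p : ℤ) ^ (e p k + 1) ∣ (x i - u i)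

/-- `f ∈ Int(S,ℤ)`, i.e. `f` maps `S` into `ℤ`. -/
def IsIntValued (S : Set ℤ) (f : Polynomial ℚ) : Prop :=
  ∀ a ∈ S, ∃ n : ℤ, f.eval (a : ℚ) = (n : ℚ)

/-- The ring `Int(S,ℤ)` of integer-valued polynomials on `S`, as a subring of `ℚ[X]`. -/
noncomputable def IntPoly (S : Set ℤ) : Subring (Polynomial ℚ) where
  carrier := {f | ∀ a ∈ S, ∃ n : ℤ, f.eval (a : ℚ) = (n : ℚ)}
  mul_mem' := by
    rintro f g hf hg
    intro a ha
    obtain ⟨n, hn⟩ := hf a ha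
    obtain ⟨m, hm⟩ := hg a ha
    exact ⟨n * m, by simp [hn, hm]⟩
  one_mem' := fun a _ => ⟨1, by simp⟩
  add_mem' := by
    rintro f g hf hg
    intro a ha
    obtain ⟨n, hn⟩ := hf a ha
    obtain ⟨m, hm⟩ := hg a ha
    exact ⟨n + m, by simp [hn, hm]⟩
  zero_mem' := fun a _ => ⟨0, by simp⟩
  neg_mem' := by
    rintro f hf a ha
    obtain ⟨n, hn⟩ := hf a ha
    exact ⟨-n, by simp [hn]⟩

/-- `f` is image primitive over `S`: no prime divides `f(a)` for all `a ∈ S`. -/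
def IsImagePrimitive (S : Set ℤ) (f : Polynomial ℚ) : Prop :=
  ∀ p : ℕ, p.Prime → ∃ a ∈ S, ∀ n : ℤ, f.eval (a : ℚ) ≠ (p : ℚ) * (n : ℚ)

/-- `m` is the fixed divisor `d(S,f)` of `f ∈ ℤ[X]` over `S` (gcd of values, up to sign). -/
def IsFixedDivisor (S : Set ℤ) (f : Polynomial ℤ) (m : ℤ) : Prop :=
  (∀ b ∈ S, m ∣ f.eval b) ∧ ∀ n : ℤ, (∀ b ∈ S, n ∣ f.eval b) → n ∣ m

/-! Evaluating at `b_i` kills the basis polynomials of index `> i`, so the values form a triangular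
system `c_i ∏_{j<i}(b_i - b_j) = f(b_i) - ∑_{m<i} c_m ∏_{j<m}(b_i - b_j)`. By strong induction on `i`,
each term of the sum is divisible by `p^e`: `p^e ∣ c_m ∏_{j<m}(b_m - b_j)`, and the `p`-ordering
property says `∏_{j<m}(b_i - b_j)` has `p`-adic valuation at least that of `∏_{j<m}(b_m - b_j)`. -/

lemma vp_eq_emultiplicity {p : ℕ} (hp : p ≠ 1) (x : ℤ) : vp p x = emultiplicity (p : ℤ) x := by
  rcases eq_or_ne x 0 with rfl | hx
  · simp [vp]
  have hfin : FiniteMultiplicity (p : ℤ) x :=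
    Int.finiteMultiplicity_iff.mpr ⟨by simpa using hp, hx⟩
  rw [vp, if_neg hx, padicValInt.of_ne_one_ne_zero hp hx, hfin.emultiplicity_eq_multiplicity]

lemma pow_dvd_mul_of_vp_le {p : ℕ} (hp : p.Prime) {e : ℕ} {c A B : ℤ}
    (hAB : vp p A ≤ vp p B) (h : (p : ℤ) ^ e ∣ c * A) : (p : ℤ) ^ e ∣ c * B := by
  have hp' : Prime (p : ℤ) := Nat.prime_iff_prime_int.mp hp
  rw [pow_dvd_iff_le_emultiplicity, emultiplicity_mul hp'] at h ⊢
  rw [vp_eq_emultiplicity hp.ne_one, vp_eq_emultiplicity hp.ne_one] at hAB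
  exact h.trans (add_le_add_right hAB _)

lemma IsPOrdering.vp_prod_le {p : ℕ} {S : Set ℤ} {b : ℕ → ℤ} (hb : IsPOrdering p S b) (m : ℕ)
    {a : ℤ} (ha : a ∈ S) :
    vp p (∏ j ∈ range m, (b m - b j)) ≤ vp p (∏ j ∈ range m, (a - b j)) := by
  rcases Nat.eq_zero_or_pos m with rfl | hm
  · simp
  · exact hb.2 m hm a ha

lemma eval_sum_C_mul_prod_X_sub_C {R : Type*} [CommRing R] (b c : ℕ → R) {n i : ℕ} (hi : i < n) :
    (∑ m ∈ range n, C (c m) * ∏ j ∈ range m, (X - C (b j))).eval (b i) =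
      ∑ m ∈ range (i + 1), c m * ∏ j ∈ range m, (b i - b j) := by
  simp only [eval_finsetSum, eval_mul, eval_C, eval_prod, eval_sub, eval_X]
  refine (sum_subset (range_subset_range.mpr hi) fun m _ hm => ?_).symm
  have him : i ∈ range m := mem_range.mpr (by simpa [Nat.lt_succ_iff] using hm)
  rw [prod_eq_zero him (sub_self _), mul_zero]

lemma IsPOrdering.pow_dvd_coeff_mul_prod {p : ℕ} (hp : p.Prime) {S : Set ℤ} {b : ℕ → ℤ}
    (hb : IsPOrdering p S b) {e k : ℕ} (c : ℕ → ℤ)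
    (h : ∀ i ≤ k, (p : ℤ) ^ e ∣ ∑ m ∈ range (i + 1), c m * ∏ j ∈ range m, (b i - b j)) :
    ∀ i ≤ k, (p : ℤ) ^ e ∣ c i * ∏ j ∈ range i, (b i - b j) := by
  intro i
  induction i using Nat.strong_induction_on with
  | _ i ih =>
    intro hik
    have hlower : (p : ℤ) ^ e ∣ ∑ m ∈ range i, c m * ∏ j ∈ range m, (b i - b j) :=
      dvd_sum fun m hm =>
        pow_dvd_mul_of_vp_le hp (hb.vp_prod_le m (hb.1 i))
          (ih m (mem_range.mp hm) ((mem_range.mp hm).le.trans hik))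
    have hi := h i hik
    rwa [sum_range_succ, dvd_add_right hlower] at hi

theorem stmt1_general (p : ℕ) (hp : p.Prime) (e : ℕ) (S : Set ℤ)
    (b : ℕ → ℤ) (hb : IsPOrdering p S b)
    (f : Polynomial ℤ) (k : ℕ) (c : ℕ → ℤ)
    (hrep : f = ∑ i ∈ Finset.range (k + 1),
      Polynomial.C (c i) * ∏ j ∈ Finset.range i, (Polynomial.X - Polynomial.C (b j)))
    (hdvd : ∀ i ≤ k, (p : ℤ) ^ e ∣ f.eval (b i)) :
    ∀ i ≤ k, (p : ℤ) ^ e ∣ c i * ∏ j ∈ Finset.range i, (b i - b j) := by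
  refine hb.pow_dvd_coeff_mul_prod hp c fun i hik => ?_
  rw [← eval_sum_C_mul_prod_X_sub_C b c (Nat.lt_succ_of_le hik), ← hrep]
  exact hdvd i hik

/-- writing `f = Σ c_i ∏_{j<i}(X - b_j)` along a `p`-ordering `b` of `S`,
if `p^e ∣ f(b i)` for all `i ≤ k` then `p^e ∣ c_i·∏_{j<i}(b_i - b_j)` for all `i ≤ k`. -/
theorem stmt1 (p : ℕ) (hp : p.Prime) (e : ℕ) (S : Set ℤ)
    (b : ℕ → ℤ) (hb : IsPOrdering p S b)
    (f : Polynomial ℤ) (k : ℕ) (hdeg : f.natDegree = k) (c : ℕ → ℤ)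
    (hrep : f = ∑ i ∈ Finset.range (k + 1),
      Polynomial.C (c i) * ∏ j ∈ Finset.range i, (Polynomial.X - Polynomial.C (b j)))
    (hdvd : ∀ i ≤ k, (p : ℤ) ^ e ∣ f.eval (b i)) :
    ∀ i ≤ k, (p : ℤ) ^ e ∣ c i * ∏ j ∈ Finset.range i, (b i - b j) :=
  stmt1_general p hp e S b hb f k c hrep hdvd
end

section
/- Let S ⊆ ℤ, d a nonzero integer, k ≥ 0, and a_0, ..., a_k a d_k-ordering of S. For every polynomial f = g/d ∈ ℚ[x] of degree k with g ∈ ℤ[x], f maps all of S into ℤ if and only if f(a_i) ∈ ℤ for all 0 ≤ i ≤ k. -/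
open Polynomial Finset

/-!
`f(x) ∈ ℤ` iff `d ∣ g(x)`, which is checked one prime power `p^t ∣ d` at a time. Fix such `p`, a
`p`-ordering `u` of `S` and let `E m` be the exponent of `p` in `m!_S`. Write
`g = ∑_{i ≤ k} c_i B_i` in the monic basis `B_i = ∏_{j < i} (X - u_j)`. On `S`, and at every point
congruent to some `u_j` modulo `p^(E k + 1)`, `B_m` is divisible by `p^(E m)`, so `p^v ∣ g` there
as soon as `p^v ∣ c_m p^(E m)` for all `m ≤ k`. Conversely, at points `y_m ≡ u_m` the matrix
`(B_i(y_m))` is triangular modulo `p^(E k + 1)` with diagonal entries of valuation exactly `E m`;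
this recovers `p^v ∣ c_m p^(E m)` from `p^v ∣ g(y_m)`, first for `v ≤ E k + 1` by induction on `m`,
then for all `v` by dividing `g` by `p`. Both `u` and `a` are such points `y`, which gives both
directions.
-/

noncomputable def nodePoly (u : ℕ → ℤ) (m : ℕ) : ℤ[X] :=
  ∏ i ∈ range m, (X - C (u i))

lemma eval_nodePoly (u : ℕ → ℤ) (m : ℕ) (z : ℤ) :
    (nodePoly u m).eval z = ∏ i ∈ range m, (z - u i) := by
  simp [nodePoly, eval_prod]

lemma monic_nodePoly (u : ℕ → ℤ) (m : ℕ) : (nodePoly u m).Monic :=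
  monic_prod_of_monic _ _ fun i _ => monic_X_sub_C (u i)

lemma natDegree_nodePoly (u : ℕ → ℤ) (m : ℕ) : (nodePoly u m).natDegree = m := by
  rw [nodePoly, natDegree_prod _ _ fun i _ => X_sub_C_ne_zero (u i)]
  simp only [natDegree_X_sub_C, sum_const, card_range, smul_eq_mul, mul_one]

lemma dvd_eval_nodePoly_of_dvd_sub (u : ℕ → ℤ) {n z : ℤ} {j m : ℕ} (hjm : j < m)
    (hz : n ∣ z - u j) : n ∣ (nodePoly u m).eval z := by
  rw [eval_nodePoly]
  exact hz.trans (dvd_prod_of_mem _ (mem_range.2 hjm))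

lemma exists_eq_sum_nodePoly (u : ℕ → ℤ) {k : ℕ} {g : ℤ[X]} (hg : g.natDegree ≤ k) :
    ∃ c : ℕ → ℤ, g = ∑ i ∈ range (k + 1), C (c i) * nodePoly u i := by
  induction k generalizing g with
  | zero =>
    refine ⟨fun _ => g.coeff 0, ?_⟩
    rw [eq_C_of_natDegree_le_zero hg]
    simp [nodePoly]
  | succ k ih =>
    have hB := monic_nodePoly u (k + 1)
    have hBdeg := natDegree_nodePoly u (k + 1)
    have hq : (g /ₘ nodePoly u (k + 1)).natDegree ≤ 0 := by
      rw [natDegree_divByMonic _ hB, hBdeg]; omega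
    have hB1 : nodePoly u (k + 1) ≠ 1 := fun h => by simp [h] at hBdeg
    obtain ⟨c, hc⟩ := ih (g := g %ₘ nodePoly u (k + 1))
      (by have := natDegree_modByMonic_lt g hB hB1; omega)
    refine ⟨Function.update c (k + 1) ((g /ₘ nodePoly u (k + 1)).coeff 0), ?_⟩
    rw [sum_range_succ, Function.update_self,
      sum_congr rfl fun i hi => by rw [Function.update_of_ne (by simp at hi; omega)], ← hc,
      ← eq_C_of_natDegree_le_zero hq, mul_comm, modByMonic_add_div]

lemma pow_dvd_iff_le_vp {p : ℕ} (hp : p.Prime) {n : ℕ} {x : ℤ} :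
    (p : ℤ) ^ n ∣ x ↔ (n : ℕ∞) ≤ vp p x := by
  have : Fact p.Prime := ⟨hp⟩
  unfold vp
  split_ifs with h
  · simp [h]
  · rw [padicValInt_dvd_iff]
    simp [h]

lemma Int.dvd_of_forall_prime_pow_dvd {d n : ℤ}
    (h : ∀ p t : ℕ, p.Prime → 0 < t → (p : ℤ) ^ t ∣ d → (p : ℤ) ^ t ∣ n) : d ∣ n := by
  rw [← Int.natAbs_dvd_natAbs, Nat.dvd_iff_prime_pow_dvd_dvd]
  intro p t hp hpt
  rcases t.eq_zero_or_pos with rfl | ht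
  · simp
  exact Int.natCast_dvd.mp (by exact_mod_cast h p t hp ht (Int.natCast_dvd.mpr hpt))

section POrdering

variable {p : ℕ} {S : Set ℤ} {u : ℕ → ℤ} {E : ℕ → ℕ}

lemma pow_dvd_eval_nodePoly (hp : p.Prime) (hu : IsPOrdering p S u)
    (hE : ∀ m, (E m : ℕ∞) = vp p (∏ i ∈ range m, (u m - u i))) {a : ℤ} (ha : a ∈ S) (m : ℕ) :
    (p : ℤ) ^ E m ∣ (nodePoly u m).eval a := by
  rw [pow_dvd_iff_le_vp hp, hE, eval_nodePoly]
  rcases m.eq_zero_or_pos with rfl | hm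
  · simp
  · exact hu.2 m hm a ha

lemma not_pow_succ_dvd_eval_nodePoly_self (hp : p.Prime)
    (hE : ∀ m, (E m : ℕ∞) = vp p (∏ i ∈ range m, (u m - u i))) (m : ℕ) :
    ¬ (p : ℤ) ^ (E m + 1) ∣ (nodePoly u m).eval (u m) := by
  rw [pow_dvd_iff_le_vp hp, eval_nodePoly, ← hE]
  exact_mod_cast Nat.not_succ_le_self (E m)

lemma monotone_of_isPOrdering (hp : p.Prime) (hu : IsPOrdering p S u)
    (hE : ∀ m, (E m : ℕ∞) = vp p (∏ i ∈ range m, (u m - u i))) : Monotone E := by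
  refine monotone_nat_of_le_succ fun m => not_lt.1 fun hlt => ?_
  apply not_pow_succ_dvd_eval_nodePoly_self hp hE (m + 1)
  rw [eval_nodePoly, prod_range_succ, ← eval_nodePoly]
  exact ((pow_dvd_pow _ hlt).trans (pow_dvd_eval_nodePoly hp hu hE (hu.1 (m + 1)) m)).mul_right _

lemma pow_dvd_eval_nodePoly_of_dvd_sub (hp : p.Prime) (hu : IsPOrdering p S u)
    (hE : ∀ m, (E m : ℕ∞) = vp p (∏ i ∈ range m, (u m - u i))) {k j m : ℕ} {z : ℤ}
    (hm : m ≤ k) (hz : (p : ℤ) ^ (E k + 1) ∣ z - u j) :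
    (p : ℤ) ^ E m ∣ (nodePoly u m).eval z := by
  have hsub := (pow_dvd_pow _ (Nat.le_succ_of_le (monotone_of_isPOrdering hp hu hE hm))).trans
    (hz.trans (sub_dvd_eval_sub z (u j) (nodePoly u m)))
  simpa using dvd_add hsub (pow_dvd_eval_nodePoly hp hu hE (hu.1 j) m)

/-- At a point `z ≡ u m`, the value `B_m(z)` has valuation exactly `E m`. -/
lemma pow_dvd_mul_pow_of_pow_dvd_mul_eval_nodePoly (hp : p.Prime) (hu : IsPOrdering p S u)
    (hE : ∀ m, (E m : ℕ∞) = vp p (∏ i ∈ range m, (u m - u i))) {k m : ℕ} {z c : ℤ} {w : ℕ}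
    (hm : m ≤ k) (hz : (p : ℤ) ^ (E k + 1) ∣ z - u m)
    (h : (p : ℤ) ^ w ∣ c * (nodePoly u m).eval z) : (p : ℤ) ^ w ∣ c * (p : ℤ) ^ E m := by
  obtain ⟨β, hβ⟩ := pow_dvd_eval_nodePoly_of_dvd_sub hp hu hE hm hz
  have hpβ : ¬ (p : ℤ) ∣ β := by
    rintro hpβ
    apply not_pow_succ_dvd_eval_nodePoly_self hp hE m
    have hsub := (pow_dvd_pow _ (Nat.succ_le_succ (monotone_of_isPOrdering hp hu hE hm))).trans
      (hz.trans (sub_dvd_eval_sub z (u m) (nodePoly u m)))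
    have hval : (p : ℤ) ^ (E m + 1) ∣ (nodePoly u m).eval z := by
      rw [hβ, pow_succ]
      exact mul_dvd_mul_left _ hpβ
    simpa using dvd_sub hval hsub
  rw [hβ, ← mul_assoc] at h
  have hcop := (Nat.prime_iff_prime_int.mp hp).coprime_iff_not_dvd.2 hpβ
  exact hcop.pow_left.dvd_of_dvd_mul_right h

lemma pow_dvd_coeff_mul_pow_of_le (hp : p.Prime) (hu : IsPOrdering p S u)
    (hE : ∀ m, (E m : ℕ∞) = vp p (∏ i ∈ range m, (u m - u i))) {k : ℕ} {y : ℕ → ℤ}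
    (hy : ∀ m ≤ k, (p : ℤ) ^ (E k + 1) ∣ y m - u m) {w : ℕ} (hw : w ≤ E k + 1) {c : ℕ → ℤ}
    (hc : ∀ m ≤ k, (p : ℤ) ^ w ∣ ∑ i ∈ range (k + 1), c i * (nodePoly u i).eval (y m)) :
    ∀ m ≤ k, (p : ℤ) ^ w ∣ c m * (p : ℤ) ^ E m := by
  intro m
  induction m using Nat.strong_induction_on with
  | _ m ih =>
  intro hm
  have hrest : (p : ℤ) ^ w ∣ ∑ i ∈ (range (k + 1)).erase m, c i * (nodePoly u i).eval (y m) := by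
    refine dvd_sum fun i hi => ?_
    rcases (mem_erase.1 hi).1.lt_or_gt with hlt | hgt
    · exact (ih i hlt (hlt.le.trans hm)).trans (mul_dvd_mul_left _
        (pow_dvd_eval_nodePoly_of_dvd_sub hp hu hE (hlt.le.trans hm) (hy m hm)))
    · exact ((pow_dvd_pow _ hw).trans (dvd_eval_nodePoly_of_dvd_sub u hgt (hy m hm))).mul_left _
  have hsum := hc m hm
  rw [← add_sum_erase _ _ (mem_range.2 (Nat.lt_succ_of_le hm))] at hsum
  exact pow_dvd_mul_pow_of_pow_dvd_mul_eval_nodePoly hp hu hE hm (hy m hm)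
    ((dvd_add_left hrest).1 hsum)

/-- Beyond `E k + 1` the triangularity is lost, but then `p` divides every `c m`, so we descend. -/
lemma pow_dvd_coeff_mul_pow (hp : p.Prime) (hu : IsPOrdering p S u)
    (hE : ∀ m, (E m : ℕ∞) = vp p (∏ i ∈ range m, (u m - u i))) {k : ℕ} {y : ℕ → ℤ}
    (hy : ∀ m ≤ k, (p : ℤ) ^ (E k + 1) ∣ y m - u m) (v : ℕ) {c : ℕ → ℤ}
    (hc : ∀ m ≤ k, (p : ℤ) ^ v ∣ ∑ i ∈ range (k + 1), c i * (nodePoly u i).eval (y m)) :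
    ∀ m ≤ k, (p : ℤ) ^ v ∣ c m * (p : ℤ) ^ E m := by
  induction v generalizing c with
  | zero => simp
  | succ v ih =>
    by_cases hv : v + 1 ≤ E k + 1
    · exact pow_dvd_coeff_mul_pow_of_le hp hu hE hy hv hc
    have hp0 : (p : ℤ) ≠ 0 := by exact_mod_cast hp.ne_zero
    have hpc : ∀ i ∈ range (k + 1), (p : ℤ) ∣ c i := fun i hi => by
      have hik := Nat.le_of_lt_succ (mem_range.1 hi)
      have h := (pow_dvd_pow (p : ℤ)
        (Nat.succ_le_succ (monotone_of_isPOrdering hp hu hE hik))).trans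
        (pow_dvd_coeff_mul_pow_of_le hp hu hE hy le_rfl
          (fun m hm => (pow_dvd_pow _ (by omega)).trans (hc m hm)) i hik)
      rw [pow_succ'] at h
      exact (mul_dvd_mul_iff_right (pow_ne_zero _ hp0)).1 h
    have hcp : ∀ i ∈ range (k + 1), c i = p * (c i / p) := fun i hi =>
      (Int.mul_ediv_cancel' (hpc i hi)).symm
    intro m hm
    rw [hcp m (mem_range.2 (Nat.lt_succ_of_le hm)), pow_succ', mul_assoc]
    refine mul_dvd_mul_left _ (ih (c := fun i => c i / p) (fun m hm => ?_) m hm)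
    have hsum := hc m hm
    rw [sum_congr rfl fun i hi => by rw [hcp i hi, mul_assoc], ← mul_sum, pow_succ'] at hsum
    exact (mul_dvd_mul_iff_left hp0).1 hsum

lemma pow_dvd_eval_of_pow_dvd_eval_nodes (hp : p.Prime) (hu : IsPOrdering p S u)
    (hE : ∀ m, (E m : ℕ∞) = vp p (∏ i ∈ range m, (u m - u i))) {k : ℕ} {y : ℕ → ℤ}
    (hy : ∀ m ≤ k, (p : ℤ) ^ (E k + 1) ∣ y m - u m) {g : ℤ[X]} (hg : g.natDegree ≤ k) {v : ℕ}
    (hv : ∀ m ≤ k, (p : ℤ) ^ v ∣ g.eval (y m)) {z : ℤ}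
    (hz : ∀ m ≤ k, (p : ℤ) ^ E m ∣ (nodePoly u m).eval z) : (p : ℤ) ^ v ∣ g.eval z := by
  obtain ⟨c, rfl⟩ := exists_eq_sum_nodePoly u hg
  simp only [eval_finsetSum, eval_mul, eval_C] at hv ⊢
  have hcoeff := pow_dvd_coeff_mul_pow hp hu hE hy v hv
  exact dvd_sum fun i hi => (hcoeff i (Nat.le_of_lt_succ (mem_range.1 hi))).trans
    (mul_dvd_mul_left _ (hz i (Nat.le_of_lt_succ (mem_range.1 hi))))

end POrdering

lemma exists_eq_intCast_eval_iff_dvd {d : ℤ} (hd : d ≠ 0) (g : ℤ[X]) (x : ℤ) :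
    (∃ n : ℤ, ((d : ℚ)⁻¹ • g.map (Int.castRingHom ℚ)).eval (x : ℚ) = n) ↔ d ∣ g.eval x := by
  simp_rw [eval_smul, eval_intCast_map, smul_eq_mul,
    inv_mul_eq_iff_eq_mul₀ (Int.cast_ne_zero.2 hd : (d : ℚ) ≠ 0), eq_intCast, ← Int.cast_mul,
    Int.cast_inj]
  rfl

/-- for a `d_k`-ordering `a` of `S` and `f = g/d` of degree `k`,
`f` maps `S` into `ℤ` iff `f(a i) ∈ ℤ` for all `0 ≤ i ≤ k`. -/
theorem stmt2 (S : Set ℤ) (d : ℤ) (hd : d ≠ 0) (k : ℕ)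
    (e : ℕ → ℕ → ℕ) (he : IsFactExp S e)
    (a : ℕ → ℤ) (ha : IsDkOrdering S d k e a)
    (g : Polynomial ℤ) (hdeg : g.natDegree = k)
    (f : Polynomial ℚ) (hf : f = (d : ℚ)⁻¹ • g.map (Int.castRingHom ℚ)) :
    IsIntValued S f ↔ ∀ i ≤ k, ∃ n : ℤ, f.eval ((a i : ℤ) : ℚ) = (n : ℚ) := by
  have hval (x : ℤ) : (∃ n : ℤ, f.eval (x : ℚ) = n) ↔ d ∣ g.eval x :=
    hf ▸ exists_eq_intCast_eval_iff_dvd hd g x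
  have hlocal (p t : ℕ) (hp : p.Prime) (ht : 0 < t) (hpt : (p : ℤ) ^ t ∣ d) :=
    ha p hp ((dvd_pow_self _ ht.ne').trans hpt)
  constructor
  · intro hint i hi
    refine (hval _).2 (Int.dvd_of_forall_prime_pow_dvd fun p t hp ht hpt => ?_)
    obtain ⟨u, hu, hau⟩ := hlocal p t hp ht hpt
    exact pow_dvd_eval_of_pow_dvd_eval_nodes hp hu (he p hp u hu) (y := u) (by simp) hdeg.le
      (fun m _ => hpt.trans ((hval _).1 (hint _ (hu.1 m))))
      (fun m hm => pow_dvd_eval_nodePoly_of_dvd_sub hp hu (he p hp u hu) hm (hau i hi))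
  · intro hvals s hs
    refine (hval _).2 (Int.dvd_of_forall_prime_pow_dvd fun p t hp ht hpt => ?_)
    obtain ⟨u, hu, hau⟩ := hlocal p t hp ht hpt
    exact pow_dvd_eval_of_pow_dvd_eval_nodes hp hu (he p hp u hu) hau hdeg.le
      (fun m hm => hpt.trans ((hval _).1 (hvals m hm)))
      (fun m _ => pow_dvd_eval_nodePoly hp hu (he p hp u hu) hs m)
end
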